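/- Let n ≥ 1 be an integer and let σ, σ₁ be real numbers with 0 < 2σ₁ ≤ σ. For η ∈ [0,∞) define h(η) = (n+η)/(n+η − min(η, 2σ₁, 2σ − η)); the denominator is strictly positive for all η ≥ 0. Then sup_{η ∈ [0,∞)} h(η) = 1 + 2σ₁/n, and the supremum is attained at η = 2σ₁. (This is the critical exponent p_c for the structurally damped equation u_tt + (−Δ)^{σ₁} u_t + (−Δ)^σ u = |u_t|^p in the effective case.) -/
import Mathlib


/-- for the structurally damped equation
`u_tt + (−Δ)^{σ₁} u_t + (−Δ)^σ u = |u_t|^p` in the effective case `0 < 2σ₁ ≤ σ`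
(`g(η) = min(η, 2σ₁, 2σ − η)`), the denominator of `h` is positive on `[0,∞)`,
`sup h = 1 + 2σ₁/n`, attained at `η = 2σ₁`. -/
theorem stmt13 (n : ℕ) (hn : 1 ≤ n) (σ σ₁ : ℝ) (hσ₁ : 0 < σ₁) (heff : 2 * σ₁ ≤ σ) :
    (∀ η : ℝ, 0 ≤ η → 0 < (n : ℝ) + η - min η (min (2 * σ₁) (2 * σ - η))) ∧
    IsGreatest {x : ℝ | ∃ η : ℝ, 0 ≤ η ∧
        x = ((n : ℝ) + η) / ((n : ℝ) + η - min η (min (2 * σ₁) (2 * σ - η)))}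
      (1 + 2 * σ₁ / n) ∧
    ((n : ℝ) + 2 * σ₁) / ((n : ℝ) + 2 * σ₁ - min (2 * σ₁) (min (2 * σ₁) (2 * σ - 2 * σ₁)))
      = 1 + 2 * σ₁ / n := by
  have hn' : (1 : ℝ) ≤ n := by exact_mod_cast hn
  have hn0 : (0 : ℝ) < n := by linarith
  have hpos : ∀ η : ℝ, 0 ≤ η → 0 < (n : ℝ) + η - min η (min (2 * σ₁) (2 * σ - η)) := by
    intro η hη
    have h1 : min η (min (2 * σ₁) (2 * σ - η)) ≤ η := min_le_left _ _
    linarith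
  have hminval : min (2 * σ₁) (min (2 * σ₁) (2 * σ - 2 * σ₁)) = 2 * σ₁ := by
    have : (2 * σ₁) ≤ 2 * σ - 2 * σ₁ := by linarith
    rw [min_eq_left this, min_self]
  have hval : ((n : ℝ) + 2 * σ₁) / ((n : ℝ) + 2 * σ₁ - min (2 * σ₁) (min (2 * σ₁) (2 * σ - 2 * σ₁)))
      = 1 + 2 * σ₁ / n := by
    rw [hminval]
    have : (n : ℝ) + 2 * σ₁ - 2 * σ₁ = n := by ring
    rw [this]
    field_simp
  refine ⟨hpos, ⟨⟨2 * σ₁, by positivity, hval.symm⟩, ?_⟩, hval⟩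
  rintro x ⟨η, hη, rfl⟩
  set g := min η (min (2 * σ₁) (2 * σ - η)) with hg
  have hg1 : g ≤ η := min_le_left _ _
  have hg2 : g ≤ 2 * σ₁ := le_trans (min_le_right _ _) (min_le_left _ _)
  have hden : 0 < (n : ℝ) + η - g := hpos η hη
  have h1 : (1 : ℝ) + 2 * σ₁ / n = ((n : ℝ) + 2 * σ₁) / n := by field_simp
  rw [h1, div_le_div_iff₀ hden hn0]
  nlinarith [mul_le_mul_of_nonneg_left hg2 hn0.le, mul_le_mul_of_nonneg_left hg1 (by positivity : (0:ℝ) ≤ 2 * σ₁)]
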